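/- If two solutions (x(t)) and (y(t)) of the system ẋ_k = α(∑_ℓ(ℓ-k)x_ℓ)x_k + λ(x_{k-1}-x_k) + γ((k+1)x_{k+1}-kx_k), both taking values in S_ξ with the same initial condition x(0) = y(0) ∈ S_ξ, satisfy the duality relation log h_{ζ(0)}(x(t)) - log h_{ζ(0)}(y(t)) = α∫_0^t ∑_ℓ ℓ(x_ℓ(s) - y_ℓ(s)) ds for all ζ(0) ∈ (0,ξ) and all t ≥ 0, then x(t) = y(t) for all t ≥ 0. -/

import Mathlib

/-!
The right-hand side of the duality relation does not depend on `ζ`, while the left-hand side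
tends to `log 1 - log 1 = 0` as `ζ → 0⁺`: the exponential moment of order `ξ` dominates the
series `h_ζ` uniformly for `ζ ≤ ξ`, so `h_ζ` is continuous there. Hence both sides vanish and
`h_ζ(x(t)) = h_ζ(y(t))` for `ζ ∈ (0, ξ)`. In the variable `w = e^ζ` this says that the power
series `∑ (x_k(t) - y_k(t)) w^k`, of radius at least `e^ξ`, vanishes on `(1, e^ξ)`, so by the
identity theorem all its coefficients vanish.
-/

open Real Set Filter Topology

theorem eq_zero_of_tsum_mul_pow_eqOn_zero {𝕜 : Type*} [RCLike 𝕜] {c : ℕ → 𝕜} {R : ℝ}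
    {U : Set 𝕜} (hc : Summable fun n => ‖c n‖ * R ^ n) (hU : IsOpen U) (hUne : U.Nonempty)
    (hUR : U ⊆ Metric.ball 0 R) (h : ∀ w ∈ U, ∑' n, c n * w ^ n = 0) : c = 0 := by
  set p := FormalMultilinearSeries.ofScalars 𝕜 c
  obtain ⟨w₀, hw₀⟩ := hUne
  have hR : 0 < R := (norm_nonneg w₀).trans_lt (mem_ball_zero_iff.mp (hUR hw₀))
  have hradius : ENNReal.ofReal R ≤ p.radius :=
    p.le_radius_of_summable_norm (r := R.toNNReal) <| by
      simpa [p, FormalMultilinearSeries.ofScalars_norm, Real.coe_toNNReal R hR.le] using hc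
  have hball : HasFPowerSeriesOnBall p.sum p 0 p.radius :=
    p.hasFPowerSeriesOnBall (lt_of_lt_of_le (by simpa using hR) hradius)
  have hanalytic : AnalyticOnNhd 𝕜 p.sum (Metric.ball 0 R) :=
    hball.analyticOnNhd.mono <| by
      rw [← Metric.eball_ofReal]; exact Metric.eball_subset_eball hradius
  have hsum_eq : ∀ w, p.sum w = ∑' n, c n * w ^ n :=
    FormalMultilinearSeries.ofScalars_sum_eq c
  have hzero_near : p.sum =ᶠ[𝓝 w₀] 0 := by
    filter_upwards [hU.mem_nhds hw₀] with w hw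
    rw [hsum_eq, h w hw, Pi.zero_apply]
  have hzero : EqOn p.sum 0 (Metric.ball 0 R) :=
    hanalytic.eqOn_zero_of_preconnected_of_eventuallyEq_zero
      (convex_ball 0 R).isPreconnected (hUR hw₀) hzero_near
  have hp : HasFPowerSeriesAt 0 p 0 :=
    hball.hasFPowerSeriesAt.congr <| eventuallyEq_of_mem (Metric.ball_mem_nhds 0 hR) hzero
  exact (FormalMultilinearSeries.ofScalars_series_eq_zero 𝕜).mp hp.eq_zero

theorem ContinuousWithinAt.eq_of_eqOn_Ioo {X : Type*} [TopologicalSpace X] [T2Space X]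
    {f : ℝ → X} {a b : ℝ} {c : X} (hf : ContinuousWithinAt f (Ioi a) a) (hab : a < b)
    (h : ∀ z ∈ Ioo a b, f z = c) : f a = c :=
  tendsto_nhds_unique hf.tendsto <|
    tendsto_const_nhds.congr' <| eventually_of_mem (Ioo_mem_nhdsGT hab) fun z hz => (h z hz).symm

noncomputable def seqMgf (p : ℕ → ℝ) (z : ℝ) : ℝ := ∑' k : ℕ, p k * exp (z * k)

section seqMgf

variable {p q : ℕ → ℝ} {ξ z : ℝ}

lemma norm_mul_exp_le_of_le (p : ℕ → ℝ) (k : ℕ) (hz : z ≤ ξ) :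
    ‖p k * exp (z * k)‖ ≤ |p k * exp (ξ * k)| := by
  simp only [Real.norm_eq_abs, abs_mul, abs_exp]
  gcongr

lemma summable_mul_exp_of_le (hp : Summable fun k : ℕ => p k * exp (ξ * k)) (hz : z ≤ ξ) :
    Summable fun k : ℕ => p k * exp (z * k) :=
  hp.abs.of_norm_bounded fun k => norm_mul_exp_le_of_le p k hz

lemma continuousOn_seqMgf (hp : Summable fun k : ℕ => p k * exp (ξ * k)) :
    ContinuousOn (seqMgf p) (Iic ξ) :=
  continuousOn_tsum (fun _ => by fun_prop) hp.abs fun k _ hz => norm_mul_exp_le_of_le p k hz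

lemma seqMgf_zero (p : ℕ → ℝ) : seqMgf p 0 = ∑' k, p k := by
  simp [seqMgf]

lemma seqMgf_sub (hp : Summable fun k : ℕ => p k * exp (ξ * k))
    (hq : Summable fun k : ℕ => q k * exp (ξ * k)) (hz : z ≤ ξ) :
    seqMgf (p - q) z = seqMgf p z - seqMgf q z := by
  simp only [seqMgf, Pi.sub_apply, sub_mul]
  exact (summable_mul_exp_of_le hp hz).tsum_sub (summable_mul_exp_of_le hq hz)

lemma tsum_le_seqMgf (hp0 : ∀ k, 0 ≤ p k) (hp : Summable fun k : ℕ => p k * exp (ξ * k))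
    (hz0 : 0 ≤ z) (hz : z ≤ ξ) : ∑' k, p k ≤ seqMgf p z := by
  have hξ : 0 ≤ ξ := hz0.trans hz
  refine Summable.tsum_le_tsum (fun k => ?_) ?_ (summable_mul_exp_of_le hp hz)
  · exact le_mul_of_one_le_right (hp0 k) (one_le_exp (by positivity))
  · simpa using summable_mul_exp_of_le hp hξ

theorem eq_zero_of_seqMgf_eqOn_zero {a b : ℝ} (hp : Summable fun k : ℕ => p k * exp (ξ * k))
    (hab : a < b) (hb : b ≤ ξ) (h : ∀ z ∈ Ioo a b, seqMgf p z = 0) : p = 0 := by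
  refine eq_zero_of_tsum_mul_pow_eqOn_zero (R := exp ξ) (U := Ioo (exp a) (exp b)) ?_
    isOpen_Ioo (nonempty_Ioo.mpr (exp_lt_exp.mpr hab)) ?_ ?_
  · simpa [← exp_nat_mul, mul_comm, abs_mul] using hp.abs
  · intro w hw
    rw [mem_ball_zero_iff, Real.norm_eq_abs, abs_of_pos ((exp_pos a).trans hw.1)]
    exact hw.2.trans_le (exp_le_exp.mpr hb)
  · intro w hw
    have hw0 : 0 < w := (exp_pos a).trans hw.1
    have hlog : log w ∈ Ioo a b :=
      ⟨(lt_log_iff_exp_lt hw0).mpr hw.1, (log_lt_iff_lt_exp hw0).mpr hw.2⟩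
    simpa only [seqMgf, mul_comm (log w), exp_nat_mul, exp_log hw0] using h _ hlog

theorem eq_of_log_seqMgf_sub_eq_const {C : ℝ} (hξ : 0 < ξ) (hp0 : ∀ k, 0 ≤ p k)
    (hq0 : ∀ k, 0 ≤ q k) (hp1 : ∑' k, p k = 1) (hq1 : ∑' k, q k = 1)
    (hp : Summable fun k : ℕ => p k * exp (ξ * k)) (hq : Summable fun k : ℕ => q k * exp (ξ * k))
    (h : ∀ z ∈ Ioo 0 ξ, log (seqMgf p z) - log (seqMgf q z) = C) : p = q := by
  have hC : C = 0 := by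
    have hcont : ContinuousAt (fun z => log (seqMgf p z) - log (seqMgf q z)) 0 := by
      have hpc := (continuousOn_seqMgf hp).continuousAt (Iic_mem_nhds hξ)
      have hqc := (continuousOn_seqMgf hq).continuousAt (Iic_mem_nhds hξ)
      exact (hpc.log (by simp [seqMgf_zero, hp1])).sub (hqc.log (by simp [seqMgf_zero, hq1]))
    simpa [seqMgf_zero, hp1, hq1, eq_comm] using
      (hcont.continuousWithinAt (s := Ioi 0)).eq_of_eqOn_Ioo hξ h
  have hmgf_pos {r : ℕ → ℝ} (hr0 : ∀ k, 0 ≤ r k) (hr1 : ∑' k, r k = 1)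
      (hr : Summable fun k : ℕ => r k * exp (ξ * k)) {z : ℝ} (hz : z ∈ Ioo 0 ξ) :
      0 < seqMgf r z :=
    zero_lt_one.trans_le (hr1 ▸ tsum_le_seqMgf hr0 hr hz.1.le hz.2.le)
  have hmgf_sub_eq_zero : ∀ z ∈ Ioo 0 ξ, seqMgf (p - q) z = 0 := fun z hz => by
    rw [seqMgf_sub hp hq hz.2.le, sub_eq_zero]
    exact log_injOn_pos (hmgf_pos hp0 hp1 hp hz) (hmgf_pos hq0 hq1 hq hz)
      (sub_eq_zero.mp ((h z hz).trans hC))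
  have hpq : Summable fun k : ℕ => (p - q) k * exp (ξ * k) := by
    simpa only [Pi.sub_apply, sub_mul] using hp.sub hq
  exact sub_eq_zero.mp (eq_zero_of_seqMgf_eqOn_zero hpq hξ le_rfl hmgf_sub_eq_zero)

end seqMgf

theorem uniqueness_from_duality_general (α ξ : ℝ) (hξ : 0 < ξ) (x y : ℝ → ℕ → ℝ)
    (hxpos : ∀ s k, 0 ≤ x s k) (hypos : ∀ s k, 0 ≤ y s k)
    (hxsum1 : ∀ s, (∑' k, x s k) = 1) (hysum1 : ∀ s, (∑' k, y s k) = 1)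
    (hxexp : ∀ s, Summable (fun k : ℕ => x s k * Real.exp (ξ * k)))
    (hyexp : ∀ s, Summable (fun k : ℕ => y s k * Real.exp (ξ * k)))
    -- duality relation:
    (hdual : ∀ z : ℝ, 0 < z → z < ξ → ∀ t : ℝ, 0 ≤ t →
      Real.log (∑' k : ℕ, x t k * Real.exp (z * k))
          - Real.log (∑' k : ℕ, y t k * Real.exp (z * k))
        = α * ∫ s in (0:ℝ)..t, ∑' ℓ : ℕ, (ℓ : ℝ) * (x s ℓ - y s ℓ)) :
    ∀ t : ℝ, 0 ≤ t → x t = y t := fun t ht =>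
  eq_of_log_seqMgf_sub_eq_const hξ (hxpos t) (hypos t) (hxsum1 t) (hysum1 t) (hxexp t) (hyexp t)
    fun z hz => hdual z hz.1 hz.2 t ht

/-- Uniqueness via duality: two `S_ξ`-valued solutions of the system with the same initial
condition which satisfy the duality relation coincide for all times. -/
theorem uniqueness_from_duality (α lam γ ξ : ℝ) (hα : 0 ≤ α) (hlam : 0 ≤ lam) (hγ : 0 ≤ γ)
    (hξ : 0 < ξ)
    (x y : ℝ → ℕ → ℝ)
    (hxpos : ∀ s k, 0 ≤ x s k) (hypos : ∀ s k, 0 ≤ y s k)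
    (hxsum1 : ∀ s, (∑' k, x s k) = 1) (hysum1 : ∀ s, (∑' k, y s k) = 1)
    (hxexp : ∀ s, Summable (fun k : ℕ => x s k * Real.exp (ξ * k)))
    (hyexp : ∀ s, Summable (fun k : ℕ => y s k * Real.exp (ξ * k)))
    (hxode : ∀ s (k : ℕ), HasDerivAt (fun u => x u k)
        (α * (∑' ℓ : ℕ, ((ℓ : ℝ) - k) * x s ℓ) * x s k
          + lam * ((if k = 0 then 0 else x s (k - 1)) - x s k)
          + γ * (((k : ℝ) + 1) * x s (k + 1) - (k : ℝ) * x s k)) s)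
    (hyode : ∀ s (k : ℕ), HasDerivAt (fun u => y u k)
        (α * (∑' ℓ : ℕ, ((ℓ : ℝ) - k) * y s ℓ) * y s k
          + lam * ((if k = 0 then 0 else y s (k - 1)) - y s k)
          + γ * (((k : ℝ) + 1) * y s (k + 1) - (k : ℝ) * y s k)) s)
    (hinit : x 0 = y 0)
    -- duality relation:
    (hdual : ∀ z : ℝ, 0 < z → z < ξ → ∀ t : ℝ, 0 ≤ t →
      Real.log (∑' k : ℕ, x t k * Real.exp (z * k))
          - Real.log (∑' k : ℕ, y t k * Real.exp (z * k))
        = α * ∫ s in (0:ℝ)..t, ∑' ℓ : ℕ, (ℓ : ℝ) * (x s ℓ - y s ℓ))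
    -- regularity assumptions:
    (hcont : Continuous (fun s => ∑' ℓ : ℕ, (ℓ : ℝ) * (x s ℓ - y s ℓ)))
    (hxderiv : ∀ t : ℝ, HasDerivWithinAt
        (fun z => Real.log (∑' k : ℕ, x t k * Real.exp (z * k)))
        (∑' k : ℕ, (k : ℝ) * x t k) (Set.Ici 0) 0)
    (hyderiv : ∀ t : ℝ, HasDerivWithinAt
        (fun z => Real.log (∑' k : ℕ, y t k * Real.exp (z * k)))
        (∑' k : ℕ, (k : ℝ) * y t k) (Set.Ici 0) 0) :
    ∀ t : ℝ, 0 ≤ t → x t = y t :=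
  uniqueness_from_duality_general α ξ hξ x y hxpos hypos hxsum1 hysum1 hxexp hyexp hdual
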